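/- Let γ be a closed curve in M in the free homotopy class c, let g, g₀ be Riemannian metrics with unique closed geodesics in each free homotopy class, and suppose γ is the g₀-geodesic in class c with ℓ_{g₀}(γ) = L_{g₀}(c). If L_g(c) ≥ L_{g₀}(c), then ∫₀^{L_{g₀}(c)} (g - g₀)_{γ(t)}(γ'(t), γ'(t)) dt ≥ 0, where γ is parametrized by g₀-arclength. -/
import Mathlib


open Set

/-- Let `γ` be the `g₀`-geodesic in the free homotopy class `c`,
parametrized by `g₀`-arclength on `[0, L₀]` with `L₀ = L_{g₀}(c)`.  The metrics
are represented by their quadratic forms `q x v = g_x(v,v)`, `q₀ x v = (g₀)_x(v,v)`.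
Since `L_g(c)` is the minimal `g`-length of closed curves in the class `c` and `γ`
lies in `c`, we have `L_g(c) ≤ ℓ_g(γ)`.  If `L_g(c) ≥ L_{g₀}(c)`, then
`∫₀^{L₀} (g-g₀)_{γ(t)}(γ'(t),γ'(t)) dt ≥ 0`. -/
theorem stmt_2
    {E : Type*} [NormedAddCommGroup E] [NormedSpace ℝ E]
    (q q₀ : E → E → ℝ) (L₀ Lg : ℝ) (hL₀ : 0 < L₀)
    (γ : ℝ → E) (γ' : ℝ → E)
    (hderiv : ∀ t ∈ Icc (0 : ℝ) L₀, HasDerivAt γ (γ' t) t)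
    (hunit : ∀ t ∈ Icc (0 : ℝ) L₀, q₀ (γ t) (γ' t) = 1)
    (hpos : ∀ x v, 0 ≤ q x v)
    (hcont : ContinuousOn (fun t => q (γ t) (γ' t)) (Icc (0 : ℝ) L₀))
    -- `γ` is a closed curve in the class `c`, so its `g`-length is at least `L_g(c)`:
    (hmin : Lg ≤ ∫ t in (0:ℝ)..L₀, Real.sqrt (q (γ t) (γ' t)))
    -- the marked length spectrum hypothesis `L_g(c) ≥ L_{g₀}(c)`:
    (hge : L₀ ≤ Lg) :
    0 ≤ ∫ t in (0:ℝ)..L₀, (q (γ t) (γ' t) - q₀ (γ t) (γ' t)) := by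
  set f : ℝ → ℝ := fun t => q (γ t) (γ' t) with hf
  have huIcc : uIcc (0:ℝ) L₀ = Icc (0:ℝ) L₀ := uIcc_of_le hL₀.le
  have hintf : IntervalIntegrable f MeasureTheory.volume 0 L₀ := by
    apply ContinuousOn.intervalIntegrable
    rwa [huIcc]
  have hsqrtcont : ContinuousOn (fun t => Real.sqrt (f t)) (Icc (0:ℝ) L₀) :=
    Real.continuous_sqrt.comp_continuousOn hcont
  have hintsqrt : IntervalIntegrable (fun t => Real.sqrt (f t)) MeasureTheory.volume 0 L₀ := by
    apply ContinuousOn.intervalIntegrable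
    rwa [huIcc]
  -- pointwise AM-GM: √(f t) ≤ (f t + 1)/2
  have hAMGM : ∀ t ∈ Icc (0:ℝ) L₀, Real.sqrt (f t) ≤ (f t + 1) / 2 := by
    intro t ht
    have h0 : 0 ≤ f t := hpos _ _
    have hs := Real.sq_sqrt h0
    have hnn := Real.sqrt_nonneg (f t)
    nlinarith [sq_nonneg (Real.sqrt (f t) - 1)]
  have hmono : (∫ t in (0:ℝ)..L₀, Real.sqrt (f t)) ≤ ∫ t in (0:ℝ)..L₀, (f t + 1) / 2 := by
    apply intervalIntegral.integral_mono_on hL₀.le hintsqrt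
    · exact (hintf.add (intervalIntegrable_const)).div_const 2
    · exact hAMGM
  have hval : (∫ t in (0:ℝ)..L₀, (f t + 1) / 2) = ((∫ t in (0:ℝ)..L₀, f t) + L₀) / 2 := by
    rw [intervalIntegral.integral_div, intervalIntegral.integral_add hintf intervalIntegrable_const,
      intervalIntegral.integral_const, smul_eq_mul]
    ring
  have hkey : L₀ ≤ ∫ t in (0:ℝ)..L₀, f t := by
    have := le_trans (le_trans hge hmin) (hval ▸ hmono)
    linarith
  have hcongr : (∫ t in (0:ℝ)..L₀, (q (γ t) (γ' t) - q₀ (γ t) (γ' t)))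
      = ∫ t in (0:ℝ)..L₀, (f t - 1) := by
    apply intervalIntegral.integral_congr
    intro t ht
    rw [huIcc] at ht
    simp [hf, hunit t ht]
  rw [hcongr, intervalIntegral.integral_sub hintf intervalIntegrable_const,
    intervalIntegral.integral_const]
  simp only [smul_eq_mul, mul_one, sub_zero]
  linarith
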